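/- Let (X, r_X, μ_X) and (X_n, r_n, μ_n), n ≥ 1, be I-marked metric measure spaces. Then d_MGP((X_n,r_n,μ_n),(X,r_X,μ_X)) → 0 as n → ∞ if and only if there exist a complete separable metric space (Z, r_Z) and isometric embeddings φ_X : X → Z and φ_n : X_n → Z, n ≥ 1, such that the Prohorov distance between (φ̃_n)_*μ_n and (φ̃_X)_*μ_X on Z × I (with metric r_Z + r_I) tends to 0 as n → ∞, where φ̃(x, u) = (φ(x), u). -/

import Mathlib

open MeasureTheory Topology Filter NNReal BoundedContinuousFunction

noncomputable section

/-- The index set `{(i,j) ∈ ℕ × ℕ : i < j}`, indexing the entries of a distance matrix. -/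
abbrev PairIdx : Type := {p : ℕ × ℕ // p.1 < p.2}

/-- The marked distance matrix space `ℝ₊^(ℕ choose 2) × I^ℕ`. -/
abbrev MDM (I : Type) : Type := (PairIdx → ℝ≥0) × (ℕ → I)

/-- `μinf` is the countable product `μ^⊗ℕ` of copies of `μ`: every finite-dimensional
cylinder has product measure. -/
def IsProductMeasure {α : Type} [MeasurableSpace α] (μ : Measure α)
    (μinf : Measure (ℕ → α)) : Prop :=
  IsProbabilityMeasure μinf ∧
    ∀ (n : ℕ) (A : ℕ → Set α), (∀ i, MeasurableSet (A i)) →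
      μinf {s | ∀ i < n, s i ∈ A i} = ∏ i ∈ Finset.range n, μ (A i)

/-- The marked distance matrix map `R^(X,r) : (X × I)^ℕ → ℝ₊^(ℕ choose 2) × I^ℕ`. -/
def distMatMap (X I : Type) [PseudoMetricSpace X] : (ℕ → X × I) → MDM I :=
  fun s => (fun p => nndist (s p.1.1).1 (s p.1.2).1, fun k => (s k).2)

/-- The marked distance matrix distribution of `(X, r, μ)`, given the product measure
`μinf = μ^⊗ℕ` on `(X × I)^ℕ`: the pushforward of `μinf` under the distance matrix map. -/
def mDMD {X I : Type} [PseudoMetricSpace X] [MeasurableSpace X] [MeasurableSpace I]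
    (μinf : Measure (ℕ → X × I)) : Measure (MDM I) :=
  μinf.map (distMatMap X I)

/-- The support of a measure on a metric space. -/
def metricSupport {α : Type} [PseudoMetricSpace α] [MeasurableSpace α] (μ : Measure α) :
    Set α := {x | ∀ ε > 0, 0 < μ (Metric.ball x ε)}

/-- Two marked metric measure spaces are equivalent (measure- and mark-preserving
isometric). -/
def MMMEquiv {I X Y : Type} [MetricSpace I] [MetricSpace X] [MetricSpace Y]
    [MeasurableSpace I] [MeasurableSpace X] [MeasurableSpace Y]
    (μX : Measure (X × I)) (μY : Measure (Y × I)) : Prop :=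
  ∃ φ : X → Y,
    Set.MapsTo φ (metricSupport (μX.map Prod.fst)) (metricSupport (μY.map Prod.fst)) ∧
    Measurable ((metricSupport (μX.map Prod.fst)).restrict φ) ∧
    (∀ x ∈ metricSupport (μX.map Prod.fst), ∀ x' ∈ metricSupport (μX.map Prod.fst),
      dist x x' = dist (φ x) (φ x')) ∧
    μX.map (Prod.map φ id) = μY

/-- The sum metric `r_Z + r_I` on `Z × I`. -/
def pairDist {Z I : Type} [PseudoMetricSpace Z] [PseudoMetricSpace I] (p q : Z × I) : ℝ :=
  dist p.1 q.1 + dist p.2 q.2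

/-- The Prohorov distance between two measures on `Z × I`, with respect to the
sum metric `r_Z + r_I`. -/
def prohorovDistSum {Z I : Type} [PseudoMetricSpace Z] [PseudoMetricSpace I]
    {m : MeasurableSpace (Z × I)} (μ ν : Measure (Z × I)) : ℝ :=
  sInf {ε : ℝ | 0 < ε ∧ ∀ A : Set (Z × I), MeasurableSet A →
    μ A ≤ ν {q | ∃ p ∈ A, pairDist p q < ε} + ENNReal.ofReal ε ∧
    ν A ≤ μ {q | ∃ p ∈ A, pairDist p q < ε} + ENNReal.ofReal ε}

/-- The Prohorov distance between two measures on a metric space. -/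
def prohorovDist {α : Type} [PseudoMetricSpace α] {m : MeasurableSpace α}
    (μ ν : Measure α) : ℝ :=
  sInf {ε : ℝ | 0 < ε ∧ ∀ A : Set α, MeasurableSet A →
    μ A ≤ ν {q | ∃ p ∈ A, dist p q < ε} + ENNReal.ofReal ε ∧
    ν A ≤ μ {q | ∃ p ∈ A, dist p q < ε} + ENNReal.ofReal ε}

/-- The marked Gromov-Prohorov distance between two marked metric measure spaces. -/
def mGPDist {I X₁ X₂ : Type} [MetricSpace I] [MetricSpace X₁] [MetricSpace X₂]
    [MeasurableSpace I] [MeasurableSpace X₁] [MeasurableSpace X₂]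
    (μ₁ : Measure (X₁ × I)) (μ₂ : Measure (X₂ × I)) : ℝ :=
  sInf {d : ℝ | ∃ (Z : Type) (_ : MetricSpace Z) (_ : MeasurableSpace Z),
    BorelSpace Z ∧ TopologicalSpace.SeparableSpace Z ∧ CompleteSpace Z ∧
    ∃ (φ₁ : X₁ → Z) (φ₂ : X₂ → Z), Isometry φ₁ ∧ Isometry φ₂ ∧
      d = prohorovDistSum (μ₁.map (Prod.map φ₁ id)) (μ₂.map (Prod.map φ₂ id))}

/-- The (unmarked) Gromov-Prohorov distance between two metric measure spaces. -/
def uGPDist {X₁ X₂ : Type} [MetricSpace X₁] [MetricSpace X₂]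
    [MeasurableSpace X₁] [MeasurableSpace X₂]
    (ν₁ : Measure X₁) (ν₂ : Measure X₂) : ℝ :=
  sInf {d : ℝ | ∃ (Z : Type) (_ : MetricSpace Z) (_ : MeasurableSpace Z),
    BorelSpace Z ∧ TopologicalSpace.SeparableSpace Z ∧ CompleteSpace Z ∧
    ∃ (φ₁ : X₁ → Z) (φ₂ : X₂ → Z), Isometry φ₁ ∧ Isometry φ₂ ∧
      d = prohorovDist (ν₁.map φ₁) (ν₂.map φ₂)}

/-- Weak convergence of a sequence of (Borel) measures. -/
def WeakConvSeq {Ω : Type} [TopologicalSpace Ω] [MeasurableSpace Ω]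
    (μs : ℕ → Measure Ω) (μ : Measure Ω) : Prop :=
  ∀ f : Ω →ᵇ ℝ, Tendsto (fun n => ∫ x, f x ∂(μs n)) atTop (𝓝 (∫ x, f x ∂μ))

/-- A function on the marked distance matrix space depends only on the distance
entries `r_{kl}` with `k < l ≤ n` and the first `n` mark coordinates. -/
def DependsOnFirst {I : Type} (n : ℕ) (φ : MDM I → ℝ) : Prop :=
  ∀ a b : MDM I, (∀ p : PairIdx, p.1.2 < n → a.1 p = b.1 p) →
    (∀ k < n, a.2 k = b.2 k) → φ a = φ b

/-- The shift `ρ₁ⁿ` on the marked distance matrix space. -/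
def shiftBy {I : Type} (n : ℕ) : MDM I → MDM I :=
  fun x => (fun p => x.1 ⟨(p.1.1 + n, p.1.2 + n), Nat.add_lt_add_right p.2 n⟩,
    fun k => x.2 (k + n))


/-- The (unmarked) distance matrix distribution of an mm-space `(X, r, ν)`, given the
product measure `νinf = ν^⊗ℕ` on `X^ℕ`. -/
def uDMD {X : Type} [PseudoMetricSpace X] [MeasurableSpace X] (νinf : Measure (ℕ → X)) :
    Measure (PairIdx → ℝ≥0) :=
  νinf.map (fun s => fun p : PairIdx => nndist (s p.1.1) (s p.1.2))

/-!
Any common embedding is admissible in the infimum defining `mGPDist`, which gives one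
direction. Conversely, pick for each `n` a space `Zₙ` containing `Xₙ` and `X` whose Prohorov
distance is within `1/(n+1)` of `mGPDist`. Glue all `Zₙ` together along their copies of `X`:
put `Zₙ` into the `n`-th copy of `ℓ^∞` by the Kuratowski embedding and let the distance between
points of different copies be the infimum of the lengths of the paths through a point of `X`.
The closure of the images of the `Zₙ` in the completion is complete and separable, and since
pushing measures forward along a 1-Lipschitz map does not increase Prohorov distances, the
distances there are bounded by those in the `Zₙ`.
-/

open TopologicalSpace
open scoped lp ENNReal

section Prohorov

variable {Z Z' I : Type} [PseudoMetricSpace Z] [PseudoMetricSpace Z'] [PseudoMetricSpace I]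

theorem prohorovDistSum_nonneg {m : MeasurableSpace (Z × I)} (μ ν : Measure (Z × I)) :
    0 ≤ prohorovDistSum μ ν :=
  Real.sInf_nonneg fun _ hε => hε.1.le

variable [MeasurableSpace Z] [MeasurableSpace Z'] [MeasurableSpace I]

theorem prohorovDistSum_map_le {f : Z → Z'} (hf : LipschitzWith 1 f) (hfm : Measurable f)
    (μ ν : Measure (Z × I)) [IsFiniteMeasure μ] [IsFiniteMeasure ν] :
    prohorovDistSum (μ.map (Prod.map f id)) (ν.map (Prod.map f id)) ≤ prohorovDistSum μ ν := by
  set F : Z × I → Z' × I := Prod.map f id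
  have hFm : Measurable F := hfm.prodMap measurable_id
  have hF : ∀ p q, pairDist (F p) (F q) ≤ pairDist p q := fun p q => by
    simpa [F, pairDist] using hf.dist_le_mul p.1 q.1
  have thicken_preimage : ∀ (ρ : Measure (Z × I)) (B : Set (Z' × I)) (ε : ℝ),
      ρ {q | ∃ p ∈ F ⁻¹' B, pairDist p q < ε} ≤ ρ.map F {q | ∃ p ∈ B, pairDist p q < ε} :=
    fun ρ B ε => by
      refine (measure_mono ?_).trans (Measure.le_map_apply hFm.aemeasurable _)
      rintro q ⟨p, hpB, hpq⟩
      exact ⟨F p, hpB, (hF p q).trans_lt hpq⟩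
  refine csInf_le_csInf ⟨0, fun _ hε => hε.1.le⟩ ?_ ?_
  · -- any `ε` exceeding both total masses is admissible
    have le_ofReal : ∀ (ρ : Measure (Z × I)) [IsFiniteMeasure ρ] (A : Set (Z × I)) {ε : ℝ},
        ρ.real Set.univ ≤ ε → ρ A ≤ ENNReal.ofReal ε := fun ρ _ A _ h =>
      (measure_mono (Set.subset_univ A)).trans
        (by rw [← ofReal_measureReal]; exact ENNReal.ofReal_le_ofReal h)
    have hμ : 0 ≤ μ.real Set.univ := measureReal_nonneg
    have hν : 0 ≤ ν.real Set.univ := measureReal_nonneg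
    exact ⟨μ.real Set.univ + ν.real Set.univ + 1, by positivity, fun A _ =>
      ⟨le_add_left (le_ofReal μ A (by linarith)), le_add_left (le_ofReal ν A (by linarith))⟩⟩
  · rintro ε ⟨hε, h⟩
    refine ⟨hε, fun B hB => ?_⟩
    obtain ⟨hμν, hνμ⟩ := h (F ⁻¹' B) (hFm hB)
    rw [Measure.map_apply hFm hB, Measure.map_apply hFm hB]
    exact ⟨hμν.trans (add_le_add (thicken_preimage ν B ε) le_rfl),
      hνμ.trans (add_le_add (thicken_preimage μ B ε) le_rfl)⟩

theorem prohorovDistSum_map_comp_le {Ω₁ Ω₂ : Type} [MeasurableSpace Ω₁] [MeasurableSpace Ω₂]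
    {f₁ : Ω₁ → Z} {f₂ : Ω₂ → Z} (hf₁ : Measurable f₁) (hf₂ : Measurable f₂) {g : Z → Z'}
    (hg : LipschitzWith 1 g) (hgm : Measurable g) (μ : Measure (Ω₁ × I)) (ν : Measure (Ω₂ × I))
    [IsFiniteMeasure μ] [IsFiniteMeasure ν] :
    prohorovDistSum (μ.map (Prod.map (g ∘ f₁) id)) (ν.map (Prod.map (g ∘ f₂) id)) ≤
      prohorovDistSum (μ.map (Prod.map f₁ id)) (ν.map (Prod.map f₂ id)) := by
  have map_comp {Ω : Type} [MeasurableSpace Ω] {f : Ω → Z} (hf : Measurable f)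
      (ρ : Measure (Ω × I)) :
      ρ.map (Prod.map (g ∘ f) id) = (ρ.map (Prod.map f id)).map (Prod.map g id) :=
    (Measure.map_map (hgm.prodMap measurable_id) (hf.prodMap measurable_id)).symm
  rw [map_comp hf₁, map_comp hf₂]
  exact prohorovDistSum_map_le hg hgm _ _

end Prohorov

theorem exists_isometry_pair (X₁ X₂ : Type) [MetricSpace X₁] [MetricSpace X₂]
    [SeparableSpace X₁] [SeparableSpace X₂] :
    ∃ (Z : Type) (_ : MetricSpace Z), SeparableSpace Z ∧ CompleteSpace Z ∧
      ∃ (φ₁ : X₁ → Z) (φ₂ : X₂ → Z), Isometry φ₁ ∧ Isometry φ₂ := by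
  let _ : MetricSpace (X₁ ⊕ X₂) := Metric.metricSpaceSum
  exact ⟨UniformSpace.Completion (X₁ ⊕ X₂), inferInstance, inferInstance, inferInstance, _, _,
    UniformSpace.Completion.coe_isometry.comp Metric.isometry_inl,
    UniformSpace.Completion.coe_isometry.comp Metric.isometry_inr⟩

section MarkedGromovProhorov

variable {I X₁ X₂ : Type} [MetricSpace I] [MetricSpace X₁] [MetricSpace X₂]
  [MeasurableSpace I] [MeasurableSpace X₁] [MeasurableSpace X₂]

theorem mGPDist_nonneg (μ₁ : Measure (X₁ × I)) (μ₂ : Measure (X₂ × I)) : 0 ≤ mGPDist μ₁ μ₂ :=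
  Real.sInf_nonneg fun _ ⟨_, _, _, _, _, _, _, _, _, _, hd⟩ =>
    hd ▸ prohorovDistSum_nonneg _ _

theorem mGPDist_le_prohorovDistSum (μ₁ : Measure (X₁ × I)) (μ₂ : Measure (X₂ × I))
    {Z : Type} [MetricSpace Z] [MeasurableSpace Z] [BorelSpace Z] [SeparableSpace Z]
    [CompleteSpace Z] {φ₁ : X₁ → Z} {φ₂ : X₂ → Z} (hφ₁ : Isometry φ₁) (hφ₂ : Isometry φ₂) :
    mGPDist μ₁ μ₂ ≤ prohorovDistSum (μ₁.map (Prod.map φ₁ id)) (μ₂.map (Prod.map φ₂ id)) :=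
  csInf_le ⟨0, fun _ ⟨_, _, _, _, _, _, _, _, _, _, hd⟩ => hd ▸ prohorovDistSum_nonneg _ _⟩
    ⟨Z, _, _, ‹_›, ‹_›, ‹_›, φ₁, φ₂, hφ₁, hφ₂, rfl⟩

theorem exists_prohorovDistSum_lt_mGPDist_add [SeparableSpace X₁] [SeparableSpace X₂]
    (μ₁ : Measure (X₁ × I)) (μ₂ : Measure (X₂ × I)) {δ : ℝ} (hδ : 0 < δ) :
    ∃ (Z : Type) (_ : MetricSpace Z) (_ : MeasurableSpace Z),
      BorelSpace Z ∧ SeparableSpace Z ∧ CompleteSpace Z ∧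
      ∃ (φ₁ : X₁ → Z) (φ₂ : X₂ → Z), Isometry φ₁ ∧ Isometry φ₂ ∧
        prohorovDistSum (μ₁.map (Prod.map φ₁ id)) (μ₂.map (Prod.map φ₂ id))
          < mGPDist μ₁ μ₂ + δ := by
  obtain ⟨Z₀, _, hsep₀, hcomp₀, ψ₁, ψ₂, hψ₁, hψ₂⟩ := exists_isometry_pair X₁ X₂
  borelize Z₀
  obtain ⟨_, ⟨Z, _, _, hB, hsep, hcomp, φ₁, φ₂, hφ₁, hφ₂, rfl⟩, hlt⟩ :=
    exists_lt_of_csInf_lt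
      (by exact ⟨_, Z₀, _, _, inferInstance, hsep₀, hcomp₀, ψ₁, ψ₂, hψ₁, hψ₂, rfl⟩)
      (lt_add_of_pos_right (mGPDist μ₁ μ₂) hδ)
  exact ⟨Z, _, _, hB, hsep, hcomp, φ₁, φ₂, hφ₁, hφ₂, hlt⟩

end MarkedGromovProhorov

namespace FamilyGlue

variable {ι X U : Type} [DecidableEq ι] [MetricSpace U] (ψ : ι → X → U)

/-- Glues the copies `{i} × U` so that the images `(i, ψ i x)` of a point `x : X` in all copies
become identified. -/
def glueDist (a b : ι × U) : ℝ :=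
  if a.1 = b.1 then dist a.2 b.2 else ⨅ x, dist a.2 (ψ a.1 x) + dist (ψ b.1 x) b.2

theorem glueDist_same (i : ι) (u v : U) : glueDist ψ (i, u) (i, v) = dist u v := if_pos rfl

theorem glueDist_le (i j : ι) (u v : U) (x : X) :
    glueDist ψ (i, u) (j, v) ≤ dist u (ψ i x) + dist (ψ j x) v := by
  unfold glueDist
  split_ifs with h
  · subst h; exact dist_triangle _ _ _
  · exact ciInf_le ⟨0, by rintro _ ⟨y, rfl⟩; positivity⟩ x

theorem le_glueDist [Nonempty X] {i j : ι} {u v : U} {c : ℝ} (hsame : i = j → c ≤ dist u v)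
    (hcross : ∀ x, c ≤ dist u (ψ i x) + dist (ψ j x) v) : c ≤ glueDist ψ (i, u) (j, v) := by
  unfold glueDist
  split_ifs with h
  exacts [hsame h, le_ciInf hcross]

theorem glueDist_comm (a b : ι × U) : glueDist ψ a b = glueDist ψ b a := by
  unfold glueDist
  by_cases h : a.1 = b.1
  · rw [if_pos h, if_pos h.symm, dist_comm]
  · rw [if_neg h, if_neg (Ne.symm h)]
    exact iInf_congr fun x => by rw [add_comm, dist_comm a.2, dist_comm (ψ b.1 x)]

variable [MetricSpace X] {ψ}

theorem glueDist_le_add_add (hψ : ∀ i, Isometry (ψ i)) (i j k : ι) (u v w : U) (x y : X) :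
    glueDist ψ (i, u) (k, w) ≤
      dist u (ψ i x) + dist (ψ j x) v + (dist v (ψ j y) + dist (ψ k y) w) := by
  have hx := dist_triangle u (ψ i x) (ψ i y)
  have hy := dist_triangle (ψ j x) v (ψ j y)
  rw [(hψ i).dist_eq] at hx
  rw [(hψ j).dist_eq] at hy
  linarith [glueDist_le ψ i k u w y]

theorem glueDist_triangle [Nonempty X] (hψ : ∀ i, Isometry (ψ i)) (a b c : ι × U) :
    glueDist ψ a c ≤ glueDist ψ a b + glueDist ψ b c := by
  obtain ⟨i, u⟩ := a
  obtain ⟨j, v⟩ := b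
  obtain ⟨k, w⟩ := c
  rw [← sub_le_iff_le_add']
  refine le_glueDist ψ (fun hjk => ?_) fun y => ?_
  · subst hjk
    rw [sub_le_comm]
    refine le_glueDist ψ (fun hij => ?_) fun x => ?_
    · subst hij
      rw [glueDist_same]
      linarith [dist_triangle u v w]
    · linarith [glueDist_le ψ i j u w x, dist_triangle (ψ j x) v w]
  · rw [sub_le_comm]
    refine le_glueDist ψ (fun hij => ?_) fun x => ?_
    · subst hij
      linarith [glueDist_le ψ i k u w y, dist_triangle u v (ψ i y)]
    · linarith [glueDist_le_add_add hψ i j k u v w x y]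

abbrev pseudoMetricSpace [Nonempty X] (hψ : ∀ i, Isometry (ψ i)) : PseudoMetricSpace (ι × U) where
  dist := glueDist ψ
  dist_self a := by rw [← a.eta, glueDist_same, dist_self]
  dist_comm := glueDist_comm ψ
  dist_triangle := glueDist_triangle hψ

theorem glueDist_eq_zero [Nonempty X] (hψ : ∀ i, Isometry (ψ i)) (i j : ι) (x : X) :
    glueDist ψ (i, ψ i x) (j, ψ j x) = 0 :=
  le_antisymm (by simpa using glueDist_le ψ i j (ψ i x) (ψ j x) x)
    (@dist_nonneg _ (pseudoMetricSpace hψ) _ _)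

end FamilyGlue

theorem exists_isometry_amalgamation {ι X : Type} [Countable ι] [MetricSpace X] [Nonempty X]
    (Z : ι → Type) [∀ i, MetricSpace (Z i)] [∀ i, SeparableSpace (Z i)]
    (β : ∀ i, X → Z i) (hβ : ∀ i, Isometry (β i)) :
    ∃ (W : Type) (_ : MetricSpace W), SeparableSpace W ∧ CompleteSpace W ∧
      ∃ θ : ∀ i, Z i → W, (∀ i, Isometry (θ i)) ∧ ∀ i j x, θ i (β i x) = θ j (β j x) := by
  classical
  let κ i : Z i → ℓ^∞(ℕ, ℝ) := kuratowskiEmbedding (Z i)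
  have hκβ i : Isometry (κ i ∘ β i) := (kuratowskiEmbedding.isometry _).comp (hβ i)
  let _ : PseudoMetricSpace (ι × ℓ^∞(ℕ, ℝ)) := FamilyGlue.pseudoMetricSpace hκβ
  let θ i (z : Z i) : UniformSpace.Completion (ι × ℓ^∞(ℕ, ℝ)) := ((i, κ i z) : ι × ℓ^∞(ℕ, ℝ))
  have hθ i : Isometry (θ i) := Isometry.of_dist_eq fun z z' => by
    rw [UniformSpace.Completion.dist_eq]
    exact (FamilyGlue.glueDist_same _ i _ _).trans ((kuratowskiEmbedding.isometry _).dist_eq z z')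
  -- the glued space is not separable, but the closure of the images of the `Z i` is
  set S := closure (⋃ i, Set.range (θ i))
  have hS : IsSeparable S :=
    (isSeparable_iUnion.2 fun i => isSeparable_range (hθ i).continuous).closure
  have hθS i z : θ i z ∈ S := subset_closure (Set.mem_iUnion.2 ⟨i, z, rfl⟩)
  refine ⟨S, inferInstance, hS.separableSpace, isClosed_closure.completeSpace_coe,
    fun i z => ⟨θ i z, hθS i z⟩, fun i => Isometry.of_dist_eq fun z z' => (hθ i).dist_eq z z',
    fun i j x => Subtype.ext (dist_eq_zero.1 ?_)⟩
  rw [UniformSpace.Completion.dist_eq]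
  exact FamilyGlue.glueDist_eq_zero hκβ i j x

theorem mGPDist_tendsto_zero_iff_common_embedding_general
    {I : Type} [MetricSpace I] [MeasurableSpace I]
    {X : Type} [MetricSpace X] [TopologicalSpace.SeparableSpace X]
    [MeasurableSpace X] [BorelSpace X]
    (μX : Measure (X × I)) [IsProbabilityMeasure μX]
    (Xn : ℕ → Type) [∀ n, MetricSpace (Xn n)]
    [∀ n, TopologicalSpace.SeparableSpace (Xn n)]
    [∀ n, MeasurableSpace (Xn n)] [∀ n, BorelSpace (Xn n)]
    (μn : (n : ℕ) → Measure (Xn n × I)) [∀ n, IsProbabilityMeasure (μn n)] :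
    Tendsto (fun n => mGPDist (μn n) μX) atTop (𝓝 0) ↔
      ∃ (Z : Type) (_ : MetricSpace Z) (_ : MeasurableSpace Z),
        BorelSpace Z ∧ TopologicalSpace.SeparableSpace Z ∧ CompleteSpace Z ∧
        ∃ (φX : X → Z) (φn : (n : ℕ) → Xn n → Z),
          Isometry φX ∧ (∀ n, Isometry (φn n)) ∧
          Tendsto
            (fun n => prohorovDistSum ((μn n).map (Prod.map (φn n) (id : I → I)))
              (μX.map (Prod.map φX (id : I → I))))
            atTop (𝓝 0) := by
  refine ⟨fun h => ?_, fun ⟨Z, _, _, _, _, _, φX, φn, hφX, hφn, h⟩ =>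
    squeeze_zero (fun n => mGPDist_nonneg _ _)
      (fun n => mGPDist_le_prohorovDistSum _ _ (hφn n) hφX) h⟩
  have : Nonempty X := (nonempty_of_isProbabilityMeasure μX).map Prod.fst
  choose Z _ _ _ _ _ α β hα hβ hlt using fun n : ℕ =>
    exists_prohorovDistSum_lt_mGPDist_add (μn n) μX (Nat.one_div_pos_of_nat (n := n))
  obtain ⟨W, _, _, _, θ, hθ, hθβ⟩ := exists_isometry_amalgamation Z β hβ
  have hbound : Tendsto (fun n : ℕ => mGPDist (μn n) μX + 1 / (n + 1)) atTop (𝓝 0) := by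
    simpa using h.add tendsto_one_div_add_atTop_nhds_zero_nat
  borelize W
  refine ⟨W, _, _, inferInstance, inferInstance, inferInstance, θ 0 ∘ β 0, fun n => θ n ∘ α n,
    (hθ 0).comp (hβ 0), fun n => (hθ n).comp (hα n),
    squeeze_zero (fun n => prohorovDistSum_nonneg _ _) (fun n => ?_) hbound⟩
  rw [show θ 0 ∘ β 0 = θ n ∘ β n from funext (hθβ 0 n)]
  exact (prohorovDistSum_map_comp_le (hα n).continuous.measurable (hβ n).continuous.measurable
    (hθ n).lipschitz (hθ n).continuous.measurable _ _).trans (hlt n).le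

/-- Lemma 3.3: `d_MGP((Xₙ,rₙ,μₙ),(X,r_X,μ_X)) → 0` if and only if all
spaces can be isometrically embedded into one complete separable metric space `Z` such
that the Prohorov distances (for the sum metric on `Z × I`) of the pushforward measures
converge to `0`. -/
theorem mGPDist_tendsto_zero_iff_common_embedding
    {I : Type} [MetricSpace I] [CompleteSpace I] [TopologicalSpace.SeparableSpace I]
    [MeasurableSpace I] [BorelSpace I]
    {X : Type} [MetricSpace X] [CompleteSpace X] [TopologicalSpace.SeparableSpace X]
    [MeasurableSpace X] [BorelSpace X]
    (μX : Measure (X × I)) [IsProbabilityMeasure μX]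
    (Xn : ℕ → Type) [∀ n, MetricSpace (Xn n)] [∀ n, CompleteSpace (Xn n)]
    [∀ n, TopologicalSpace.SeparableSpace (Xn n)]
    [∀ n, MeasurableSpace (Xn n)] [∀ n, BorelSpace (Xn n)]
    (μn : (n : ℕ) → Measure (Xn n × I)) [∀ n, IsProbabilityMeasure (μn n)] :
    Tendsto (fun n => mGPDist (μn n) μX) atTop (𝓝 0) ↔
      ∃ (Z : Type) (_ : MetricSpace Z) (_ : MeasurableSpace Z),
        BorelSpace Z ∧ TopologicalSpace.SeparableSpace Z ∧ CompleteSpace Z ∧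
        ∃ (φX : X → Z) (φn : (n : ℕ) → Xn n → Z),
          Isometry φX ∧ (∀ n, Isometry (φn n)) ∧
          Tendsto
            (fun n => prohorovDistSum ((μn n).map (Prod.map (φn n) (id : I → I)))
              (μX.map (Prod.map φX (id : I → I))))
            atTop (𝓝 0) :=
  mGPDist_tendsto_zero_iff_common_embedding_general μX Xn μn
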